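/- arXiv:1907.04485 — 4 statements merged into one kernel-verified Lean document; each statement's English description precedes it below -/
import Mathlib

section
/- Let p = (p_1, …, p_n) be a probability distribution on n elements with p_i ≤ c·p_j for all i,j and some c > 1. Given m i.i.d. samples from p, the expected number of distinct elements observed is at least ((e-1)/(2e))·min(m,n)/c. -/
/-- Distinct elements lemma: if `p` is a probability distribution on `n` elements
    with `p i ≤ c · p j` for all `i,j` and some `c > 1`, then the expected number of
    distinct elements observed after `m` i.i.d. samples, `∑ i, (1 - (1 - p i)^m)`,
    is at least `((e-1)/(2e)) · min(m,n) / c`. -/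
theorem expected_distinct_elements (n m : ℕ) (p : Fin n → ℝ) (c : ℝ)
    (hc : 1 < c) (hnonneg : ∀ i, 0 ≤ p i) (hsum : ∑ i, p i = 1)
    (hclose : ∀ i j, p i ≤ c * p j) :
    ((Real.exp 1 - 1) / (2 * Real.exp 1)) * (min m n : ℝ) / c ≤
      ∑ i, (1 - (1 - p i) ^ m) := by
  have hc0 : (0:ℝ) < c := lt_trans one_pos hc
  have hn : 0 < n := by
    rcases Nat.eq_zero_or_pos n with h | h
    · subst h; simp at hsum
    · exact h
  have hnR : (0:ℝ) < n := by exact_mod_cast hn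
  have hnc : (0:ℝ) < (n:ℝ) * c := mul_pos hnR hc0
  have hp1 : ∀ i, p i ≤ 1 := by
    intro i
    rw [← hsum]
    exact Finset.single_le_sum (fun j _ => hnonneg j) (Finset.mem_univ i)
  have hlb : ∀ i, 1 / ((n:ℝ) * c) ≤ p i := by
    intro i
    rw [div_le_iff₀ hnc]
    have h1 : (1:ℝ) ≤ (n:ℝ) * (c * p i) := by
      calc (1:ℝ) = ∑ j, p j := hsum.symm
        _ ≤ ∑ _j : Fin n, c * p i := Finset.sum_le_sum (fun j _ => hclose j i)
        _ = (n:ℝ) * (c * p i) := by simp [Finset.sum_const, mul_comm]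
    nlinarith
  set x : ℝ := (min m n : ℝ) / ((n:ℝ) * c) with hx
  have hminn : (min m n : ℝ) ≤ (n:ℝ) := by exact_mod_cast min_le_right m n
  have hminm : (min m n : ℝ) ≤ (m:ℝ) := by exact_mod_cast min_le_left m n
  have hmin0 : (0:ℝ) ≤ (min m n : ℝ) := by positivity
  have hx0 : 0 ≤ x := div_nonneg hmin0 hnc.le
  have hx1 : x ≤ 1 := by
    rw [hx, div_le_one hnc]
    nlinarith
  have hE : (0:ℝ) < Real.exp 1 := Real.exp_pos 1
  have hE3 : Real.exp 1 < 3 := by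
    have := Real.exp_one_lt_d9
    linarith
  have hE1 : 1 < Real.exp 1 := by
    have := Real.add_one_le_exp (1:ℝ)
    linarith
  set C : ℝ := (Real.exp 1 - 1) / (2 * Real.exp 1) with hC
  have key : ∀ i : Fin n, C * x ≤ 1 - (1 - p i) ^ m := by
    intro i
    have hpi0 := hnonneg i
    have hpi1 := hp1 i
    have h1 : (1 - p i) ^ m ≤ Real.exp (-((m:ℝ) * p i)) := by
      calc (1 - p i) ^ m ≤ (Real.exp (-p i)) ^ m := by
            apply pow_le_pow_left₀ (by linarith)
            linarith [Real.add_one_le_exp (-p i)]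
        _ = Real.exp (-((m:ℝ) * p i)) := by
            rw [← Real.exp_nat_mul]; ring_nf
    have hxm : x ≤ (m:ℝ) * p i := by
      have s1 : x ≤ (m:ℝ) / ((n:ℝ) * c) := by
        rw [hx]; gcongr
      have s2 : (m:ℝ) / ((n:ℝ) * c) ≤ (m:ℝ) * p i := by
        have := hlb i
        have hm0 : (0:ℝ) ≤ (m:ℝ) := Nat.cast_nonneg m
        calc (m:ℝ) / ((n:ℝ) * c) = (m:ℝ) * (1 / ((n:ℝ) * c)) := by ring
          _ ≤ (m:ℝ) * p i := mul_le_mul_of_nonneg_left this hm0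
      linarith
    have h2 : Real.exp (-((m:ℝ) * p i)) ≤ Real.exp (-x) :=
      Real.exp_le_exp.mpr (by linarith)
    have h3 : x * Real.exp (-x) ≤ 1 - Real.exp (-x) := by
      have ha := Real.add_one_le_exp x
      have hb : Real.exp (-x) * Real.exp x = 1 := by
        rw [← Real.exp_add]; simp
      nlinarith [Real.exp_pos (-x)]
    have h4 : Real.exp (-1) ≤ Real.exp (-x) :=
      Real.exp_le_exp.mpr (by linarith)
    have h5 : C * x ≤ x * Real.exp (-1) := by
      have hb : Real.exp (-1) * Real.exp 1 = 1 := by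
        rw [← Real.exp_add]; simp
      have hCle : C ≤ Real.exp (-1) := by
        rw [hC, div_le_iff₀ (by positivity)]
        nlinarith
      calc C * x ≤ Real.exp (-1) * x := mul_le_mul_of_nonneg_right hCle hx0
        _ = x * Real.exp (-1) := mul_comm _ _
    nlinarith [mul_le_mul_of_nonneg_left h4 hx0]
  have hsum2 : ∑ _i : Fin n, C * x ≤ ∑ i, (1 - (1 - p i) ^ m) :=
    Finset.sum_le_sum fun i _ => key i
  have hconst : ∑ _i : Fin n, C * x = (n:ℝ) * (C * x) := by
    simp [Finset.sum_const, mul_comm]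
  have heq : (n:ℝ) * (C * x) = C * (min m n : ℝ) / c := by
    rw [hx]; field_simp
  calc C * (min m n : ℝ) / c = ∑ _i : Fin n, C * x := by rw [hconst, heq]
    _ ≤ ∑ i, (1 - (1 - p i) ^ m) := hsum2
end

section
/- Fix q_1, …, q_n ≥ 0 and m ≥ 1. Suppose x' ∈ ℝ^i satisfies x'_j ≥ 1 for all j ≤ i and ∑_{j=1}^i x'_j = m, and define integers x_j = ⌊x'_j⌋ for 2 ≤ j ≤ i and x_1 = m - ∑_{j=2}^i ⌊x'_j⌋. Then x is a feasible integer vector (x_j ≥ 1, ∑ x_j = m) with x_j ≥ x'_j/2 for all j, and hence ∑_{j=1}^i x_j/(x_j+q_j) ≥ (1/2)·∑_{j=1}^i x'_j/(x'_j+q_j). -/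
open Finset

/-! Rounding down every coordinate but the first keeps each of them above half its value
(as `⌊t⌋ > t / 2` for `t ≥ 1`), and since floors only decrease, the slack collected in
the first coordinate makes it at least its fractional value. The objective loses at most a factor
`1 / 2` because `t ↦ t / (t + p)` is monotone and `(t / 2) / (t / 2 + p) ≥ (1 / 2) · t / (t + p)`. -/

lemma div_add_le_div_add {a b p : ℝ} (hp : 0 ≤ p) (ha : 0 < a) (hab : a ≤ b) :
    a / (a + p) ≤ b / (b + p) := by
  rw [div_le_div_iff₀ (by positivity) (by linarith)]
  nlinarith

lemma half_mul_div_add_le {a b p : ℝ} (hp : 0 ≤ p) (ha : 0 < a) (hab : a / 2 ≤ b) :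
    1 / 2 * (a / (a + p)) ≤ b / (b + p) :=
  calc 1 / 2 * (a / (a + p)) = a / 2 / (a + p) := by ring
    _ ≤ a / 2 / (a / 2 + p) := by gcongr; linarith
    _ ≤ b / (b + p) := div_add_le_div_add hp (by positivity) hab

section RoundDown

variable {ι : Type*} [Fintype ι] [DecidableEq ι]

noncomputable def roundDown (x' : ι → ℝ) (m : ℤ) (i₀ : ι) (j : ι) : ℤ :=
  if j = i₀ then m - ∑ j' ∈ univ.erase i₀, ⌊x' j'⌋ else ⌊x' j⌋

variable (x' : ι → ℝ) (m : ℤ) (i₀ : ι)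

lemma roundDown_self : roundDown x' m i₀ i₀ = m - ∑ j ∈ univ.erase i₀, ⌊x' j⌋ :=
  if_pos rfl

lemma roundDown_of_ne {j : ι} (hj : j ≠ i₀) : roundDown x' m i₀ j = ⌊x' j⌋ :=
  if_neg hj

lemma sum_roundDown : ∑ j, roundDown x' m i₀ j = m := by
  rw [← add_sum_erase _ _ (mem_univ i₀), roundDown_self,
    sum_congr rfl fun j hj => roundDown_of_ne x' m i₀ (ne_of_mem_erase hj)]
  ring

lemma le_roundDown_self (hsum : ∑ j, x' j = m) : x' i₀ ≤ roundDown x' m i₀ i₀ := by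
  have hfloor : ∑ j ∈ univ.erase i₀, (⌊x' j⌋ : ℝ) ≤ ∑ j ∈ univ.erase i₀, x' j :=
    sum_le_sum fun j _ => Int.floor_le _
  rw [← add_sum_erase _ _ (mem_univ i₀)] at hsum
  rw [roundDown_self]
  push_cast
  linarith

lemma div_two_le_roundDown (hx1 : ∀ j, 1 ≤ x' j) (hsum : ∑ j, x' j = m) (j : ι) :
    x' j / 2 ≤ roundDown x' m i₀ j := by
  by_cases hj : j = i₀
  · subst hj
    linarith [hx1 j, le_roundDown_self x' m j hsum]
  · rw [roundDown_of_ne x' m i₀ hj]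
    exact (Int.div_two_lt_floor (hx1 j)).le

lemma one_le_roundDown (hx1 : ∀ j, 1 ≤ x' j) (hsum : ∑ j, x' j = m) (j : ι) :
    1 ≤ roundDown x' m i₀ j := by
  have : (0 : ℝ) < roundDown x' m i₀ j := by
    linarith [hx1 j, div_two_le_roundDown x' m i₀ hx1 hsum j]
  exact_mod_cast this

end RoundDown

theorem rounding_high_value_general (n m : ℕ)
    (q : Fin (n + 1) → ℝ) (hq : ∀ j, 0 ≤ q j)
    (x' : Fin (n + 1) → ℝ) (hx1 : ∀ j, 1 ≤ x' j) (hxsum : ∑ j, x' j = m) :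
    let x : Fin (n + 1) → ℤ := fun j =>
      if j = 0 then (m : ℤ) - ∑ j' ∈ univ.erase 0, ⌊x' j'⌋ else ⌊x' j⌋
    (∀ j, 1 ≤ x j) ∧ (∑ j, x j = (m : ℤ)) ∧
      (∀ j, x' j / 2 ≤ (x j : ℝ)) ∧
      (1 / 2) * ∑ j, x' j / (x' j + q j) ≤ ∑ j, (x j : ℝ) / ((x j : ℝ) + q j) := by
  intro x
  have hsum : ∑ j, x' j = ((m : ℤ) : ℝ) := by rw [hxsum, Int.cast_natCast]
  have hhalf : ∀ j, x' j / 2 ≤ (x j : ℝ) := div_two_le_roundDown x' m 0 hx1 hsum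
  refine ⟨one_le_roundDown x' m 0 hx1 hsum, sum_roundDown x' m 0, hhalf, ?_⟩
  rw [mul_sum]
  exact sum_le_sum fun j _ => half_mul_div_add_le (hq j) (by linarith [hx1 j]) (hhalf j)

/-- Rounding a feasible fractional solution (each coordinate ≥ 1, summing to `m`) by
    taking floors on coordinates `j ≠ 0` and putting the slack on coordinate `0`
    yields an integer vector with `x j ≥ 1`, `∑ x j = m`, `x j ≥ x' j / 2`, and losing
    at most a factor `1/2` in the objective `∑ x j/(x j + q j)`. -/
theorem rounding_high_value (n m : ℕ) (hm : 1 ≤ m)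
    (q : Fin (n + 1) → ℝ) (hq : ∀ j, 0 ≤ q j)
    (x' : Fin (n + 1) → ℝ) (hx1 : ∀ j, 1 ≤ x' j) (hxsum : ∑ j, x' j = m) :
    let x : Fin (n + 1) → ℤ := fun j =>
      if j = 0 then (m : ℤ) - ∑ j' ∈ univ.erase 0, ⌊x' j'⌋ else ⌊x' j⌋
    (∀ j, 1 ≤ x j) ∧ (∑ j, x j = (m : ℤ)) ∧
      (∀ j, x' j / 2 ≤ (x j : ℝ)) ∧
      (1 / 2) * ∑ j, x' j / (x' j + q j) ≤ ∑ j, (x j : ℝ) / ((x j : ℝ) + q j) :=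
  rounding_high_value_general n m q hq x' hx1 hxsum
end

section
/- Under the singleton-menu construction where supplier j is shown alone to x_j customers (∑_j x_j = m, v_j ≥ 1 for all j, supplier outside options q_j ≥ 0), the expected number of matches satisfies ∑_j E[Y_j] ≥ (1/4)(1 - e^{-1/24})·∑_j x_j/(x_j+q_j), where Y_j is the indicator that supplier j matches and, conditional on X_j customers choosing j, P(Y_j = 1 | X_j) = X_j/(X_j+q_j). -/
open MeasureTheory ProbabilityTheory

/-! Since `X j ≤ x j`, the pointwise bound `X/(x + q) ≤ X/(X + q)` already gives
`E[X/(X + q)] ≥ E[X]/(x + q) = x p/(x + q)` with `p = v/(v + 1) ≥ 1/2`, and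
`1/2 ≥ (1/4)(1 - e^{-1/24})`. -/

lemma div_add_le_div_add_of_le {a b q : ℝ} (ha : 0 ≤ a) (hab : a ≤ b) (hq : 0 ≤ q) :
    a / (b + q) ≤ a / (a + q) := by
  rcases ha.eq_or_lt with rfl | ha
  · simp
  · exact div_le_div_of_nonneg_left ha.le (by linarith) (by linarith)

lemma div_add_self_nonneg {a q : ℝ} (ha : 0 ≤ a) (hq : 0 ≤ q) : 0 ≤ a / (a + q) :=
  div_nonneg ha (by linarith)

lemma div_add_self_le_one {a q : ℝ} (ha : 0 ≤ a) (hq : 0 ≤ q) : a / (a + q) ≤ 1 :=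
  div_le_one_of_le₀ (by linarith) (by linarith)

section Integral

variable {Ω : Type*} [MeasurableSpace Ω] {μ : Measure Ω}

theorem integral_div_add_le_integral_div_self_add [IsFiniteMeasure μ] {f : Ω → ℝ}
    (hf : Measurable f) {b q : ℝ} (hf0 : ∀ ω, 0 ≤ f ω) (hfb : ∀ ω, f ω ≤ b) (hq : 0 ≤ q) :
    (∫ ω, f ω ∂μ) / (b + q) ≤ ∫ ω, f ω / (f ω + q) ∂μ := by
  have hf_int : Integrable f μ :=
    .of_bound hf.aestronglyMeasurable b (.of_forall fun ω ↦ by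
      rw [Real.norm_of_nonneg (hf0 ω)]; exact hfb ω)
  have hg_int : Integrable (fun ω ↦ f ω / (f ω + q)) μ :=
    .of_bound (hf.div (hf.add_const q)).aestronglyMeasurable 1 (.of_forall fun ω ↦ by
      rw [Real.norm_of_nonneg (div_add_self_nonneg (hf0 ω) hq)]
      exact div_add_self_le_one (hf0 ω) hq)
  rw [← integral_div]
  exact integral_mono (hf_int.div_const _) hg_int
    fun ω ↦ div_add_le_div_add_of_le (hf0 ω) (hfb ω) hq

lemma integral_natCast_eq_measureReal_of_le_one {f : Ω → ℕ} (hf : Measurable f)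
    (hf1 : ∀ ω, f ω ≤ 1) : ∫ ω, (f ω : ℝ) ∂μ = μ.real {ω | f ω = 1} := by
  have h_ind : (fun ω ↦ (f ω : ℝ)) = {ω | f ω = 1}.indicator 1 := by
    funext ω
    rcases Nat.le_one_iff_eq_zero_or_eq_one.mp (hf1 ω) with h | h <;> simp [h]
  rw [h_ind]
  exact integral_indicator_one (hf (measurableSet_singleton 1))

lemma integral_sum_natCast_eq_sum_measureReal [IsFiniteMeasure μ] {ι : Type*} [Fintype ι]
    {B : ι → Ω → ℕ} (hB : ∀ i, Measurable (B i)) (hB1 : ∀ i ω, B i ω ≤ 1) :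
    ∫ ω, ((∑ i, B i ω : ℕ) : ℝ) ∂μ = ∑ i, μ.real {ω | B i ω = 1} := by
  have hB_int : ∀ i, Integrable (fun ω ↦ (B i ω : ℝ)) μ := fun i ↦
    .of_bound (measurable_from_nat.comp (hB i)).aestronglyMeasurable 1 (.of_forall fun ω ↦ by
      simpa using hB1 i ω)
  simp_rw [Nat.cast_sum]
  rw [integral_finsetSum _ fun i _ ↦ hB_int i]
  exact Finset.sum_congr rfl fun i _ ↦ integral_natCast_eq_measureReal_of_le_one (hB i) (hB1 i)

theorem card_mul_div_le_integral_sum_div_sum_add [IsFiniteMeasure μ] {ι : Type*} [Fintype ι]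
    {B : ι → Ω → ℕ} (hB : ∀ i, Measurable (B i)) (hB1 : ∀ i ω, B i ω ≤ 1) {p q : ℝ}
    (hp : ∀ i, μ.real {ω | B i ω = 1} = p) (hq : 0 ≤ q) :
    Fintype.card ι * p / (Fintype.card ι + q) ≤
      ∫ ω, ((∑ i, B i ω : ℕ) : ℝ) / (((∑ i, B i ω : ℕ) : ℝ) + q) ∂μ := by
  have h_count_le : ∀ ω, ((∑ i, B i ω : ℕ) : ℝ) ≤ Fintype.card ι := fun ω ↦ by
    exact_mod_cast (Finset.sum_le_sum fun i _ ↦ hB1 i ω).trans_eq (by simp)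
  have h_mean := integral_sum_natCast_eq_sum_measureReal (μ := μ) hB hB1
  simp only [hp, Finset.sum_const, Finset.card_univ, nsmul_eq_mul] at h_mean
  rw [← h_mean]
  exact integral_div_add_le_integral_div_self_add (measurable_from_nat.comp
    (Finset.measurable_fun_sum _ fun i _ ↦ hB i)) (fun _ ↦ Nat.cast_nonneg _) h_count_le hq

end Integral

lemma singleton_menu_constant_le_half : 1 / 4 * (1 - Real.exp (-(1 / 24))) ≤ (1 / 2 : ℝ) := by
  nlinarith [Real.exp_pos (-(1 / 24 : ℝ))]

lemma half_le_div_add_one {v : ℝ} (hv : 1 ≤ v) : 1 / 2 ≤ v / (v + 1) := by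
  rw [le_div_iff₀ (by linarith)]; linarith

theorem singleton_menu_matches_general {Ω : Type*} [MeasurableSpace Ω]
    (μ : Measure Ω) [IsProbabilityMeasure μ]
    (n : ℕ) (v : Fin n → ℝ) (hv : ∀ j, 1 ≤ v j)
    (q : Fin n → ℝ) (hq : ∀ j, 0 ≤ q j)
    (x : Fin n → ℕ)
    (B : ∀ j : Fin n, Fin (x j) → Ω → ℕ)
    (hmeas : ∀ j i, Measurable (B j i))
    (hber : ∀ j i ω, B j i ω ≤ 1)
    (hp : ∀ j i, (μ {ω | B j i ω = 1}).toReal = v j / (v j + 1))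
    (Y : Fin n → Ω → ℕ)
    (hY : ∀ j, (μ {ω | Y j ω = 1}).toReal =
      ∫ ω, ((∑ i, B j i ω : ℕ) : ℝ) / (((∑ i, B j i ω : ℕ) : ℝ) + q j) ∂μ) :
    (1 / 4) * (1 - Real.exp (-(1 / 24))) * ∑ j, (x j : ℝ) / ((x j : ℝ) + q j) ≤
      ∑ j, (μ {ω | Y j ω = 1}).toReal := by
  rw [Finset.mul_sum]
  refine Finset.sum_le_sum fun j _ ↦ ?_
  have h_ratio : 0 ≤ (x j : ℝ) / (x j + q j) := div_add_self_nonneg (by positivity) (hq j)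
  have h_supplier := card_mul_div_le_integral_sum_div_sum_add (μ := μ) (hmeas j) (hber j) (hp j)
    (hq j)
  rw [Fintype.card_fin] at h_supplier
  calc 1 / 4 * (1 - Real.exp (-(1 / 24))) * ((x j : ℝ) / (x j + q j))
      ≤ v j / (v j + 1) * ((x j : ℝ) / (x j + q j)) := by
        gcongr
        exact singleton_menu_constant_le_half.trans (half_le_div_add_one (hv j))
    _ = x j * (v j / (v j + 1)) / (x j + q j) := by ring
    _ ≤ (μ {ω | Y j ω = 1}).toReal := hY j ▸ h_supplier

/-- Singleton-menu guarantee: supplier `j` (value `v j ≥ 1`, outside option `q j ≥ 0`)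
    is shown alone to `x j` customers, `∑ j, x j = m`; `X j = ∑ i, B j i` counts the
    customers choosing `j` (independent Bernoulli(`v j/(v j+1)`) choices), and `Y j` is
    the indicator that supplier `j` matches, with `E[Y j] = E[X j/(X j + q j)]`.
    Then `∑ j, E[Y j] ≥ (1/4)(1 - e^{-1/24}) · ∑ j, x j/(x j + q j)`. -/
theorem singleton_menu_matches {Ω : Type*} [MeasurableSpace Ω]
    (μ : Measure Ω) [IsProbabilityMeasure μ]
    (n m : ℕ) (v : Fin n → ℝ) (hv : ∀ j, 1 ≤ v j)
    (q : Fin n → ℝ) (hq : ∀ j, 0 ≤ q j)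
    (x : Fin n → ℕ) (hx : ∑ j, x j = m) (hx1 : ∀ j, 1 ≤ x j)
    (B : ∀ j : Fin n, Fin (x j) → Ω → ℕ)
    (hmeas : ∀ j i, Measurable (B j i))
    (hber : ∀ j i ω, B j i ω ≤ 1)
    (hp : ∀ j i, (μ {ω | B j i ω = 1}).toReal = v j / (v j + 1))
    (hind : ∀ j, iIndepFun (B j) μ)
    (Y : Fin n → Ω → ℕ)
    (hYber : ∀ j ω, Y j ω ≤ 1)
    (hY : ∀ j, (μ {ω | Y j ω = 1}).toReal =
      ∫ ω, ((∑ i, B j i ω : ℕ) : ℝ) / (((∑ i, B j i ω : ℕ) : ℝ) + q j) ∂μ) :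
    (1 / 4) * (1 - Real.exp (-(1 / 24))) * ∑ j, (x j : ℝ) / ((x j : ℝ) + q j) ≤
      ∑ j, (μ {ω | Y j ω = 1}).toReal :=
  singleton_menu_matches_general μ n v hv q hq x B hmeas hber hp Y hY
end

section
/- In the optimal-menu instance reduced from 3-partition, if the optimal menus are disjoint, customers have outside option v_0 > 0, supplier outside options are all 0, supplier values satisfy ∑_{j} v_j = 1, and a menu profile assigns customer i a disjoint set M_i with mass α_i = ∑_{j ∈ M_i} v_j, then the expected number of matches equals ∑_{i=1}^m α_i/(v_0+α_i) ≤ m/(m·v_0+1), with equality if and only if α_i = 1/m for all i (when such balanced menus are feasible). -/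
/-!
The masses `α i = ∑ j ∈ M i, v j` of disjoint menus add up to at most `∑ j, v j = 1`. The map
`x ↦ x / (v₀ + x)` is strictly concave and strictly increasing, so Jensen's inequality with
uniform weights gives `∑ i, f (α i) ≤ m f (mean α) ≤ m f (1 / m) = m / (m v₀ + 1)`. Equality in
the first step forces `α` to be constant, and in the second forces its mean to be `1 / m`.
-/

open Finset Function

theorem strictConcaveOn_div_add {c : ℝ} (hc : 0 < c) :
    StrictConcaveOn ℝ (Set.Ioi (-c)) fun x => x / (c + x) := by
  refine ⟨convex_Ioi _, fun x hx y hy hxy a b ha hb hab => ?_⟩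
  simp only [Set.mem_Ioi, smul_eq_mul] at *
  have hx' : 0 < c + x := by linarith
  have hy' : 0 < c + y := by linarith
  have hxy' : 0 < c + (a * x + b * y) := by nlinarith
  obtain rfl : b = 1 - a := by linarith
  rw [mul_div_assoc', mul_div_assoc', div_add_div _ _ hx'.ne' hy'.ne',
    div_lt_div_iff₀ (by positivity) hxy']
  have hsq : 0 < (x - y) ^ 2 := sq_pos_of_ne_zero (sub_ne_zero.2 hxy)
  -- the concavity gap is `a b c (x - y)² / ((c + x) (c + y) (c + a x + b y))`
  nlinarith [mul_pos (mul_pos ha hb) (mul_pos hc hsq)]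

theorem strictMonoOn_div_add {c : ℝ} (hc : 0 < c) :
    StrictMonoOn (fun x => x / (c + x)) (Set.Ioi (-c)) := by
  intro x hx y hy hxy
  simp only [Set.mem_Ioi] at hx hy
  rw [div_lt_div_iff₀ (by linarith) (by linarith)]
  nlinarith

section UniformJensen

variable {ι : Type*} [Fintype ι] [Nonempty ι] {s : Set ℝ} {f : ℝ → ℝ} {p : ι → ℝ} {t : ℝ}

local notation "n" => (Fintype.card ι : ℝ)

lemma sum_inv_card_eq_one : ∑ _i : ι, n⁻¹ = 1 := by
  simp [card_univ]

lemma Convex.inv_card_mul_sum_mem (hs : Convex ℝ s) (hp : ∀ i, p i ∈ s) :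
    n⁻¹ * ∑ i, p i ∈ s := by
  simpa [mul_sum] using
    hs.sum_mem (fun _ _ => by positivity) sum_inv_card_eq_one fun i _ => hp i

lemma ConcaveOn.sum_le_card_mul_map_mean (hf : ConcaveOn ℝ s f) (hp : ∀ i, p i ∈ s) :
    ∑ i, f (p i) ≤ n * f (n⁻¹ * ∑ i, p i) := by
  have := hf.le_map_sum (fun _ _ => by positivity) sum_inv_card_eq_one fun i _ => hp i
  simpa [← mul_sum, inv_mul_le_iff₀ (by positivity : (0 : ℝ) < n)] using this

lemma StrictConcaveOn.sum_eq_card_mul_map_mean_iff (hf : StrictConcaveOn ℝ s f)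
    (hp : ∀ i, p i ∈ s) :
    ∑ i, f (p i) = n * f (n⁻¹ * ∑ i, p i) ↔ ∀ j, p j = n⁻¹ * ∑ i, p i := by
  have := hf.map_sum_eq_iff (fun _ _ => by positivity) sum_inv_card_eq_one fun i _ => hp i
  simp only [smul_eq_mul, ← mul_sum, mem_univ, forall_const] at this
  rw [← this, eq_inv_mul_iff_mul_eq₀ (by positivity), eq_comm]

lemma ConcaveOn.sum_le_card_mul_of_sum_le (hf : ConcaveOn ℝ s f) (hmono : MonotoneOn f s)
    (hp : ∀ i, p i ∈ s) (ht : t ∈ s) (hsum : ∑ i, p i ≤ n * t) :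
    ∑ i, f (p i) ≤ n * f t := by
  have hmean_le : n⁻¹ * ∑ i, p i ≤ t := by rwa [inv_mul_le_iff₀ (by positivity)]
  calc ∑ i, f (p i) ≤ n * f (n⁻¹ * ∑ i, p i) := hf.sum_le_card_mul_map_mean hp
    _ ≤ n * f t := by
      gcongr
      exact hmono (hf.1.inv_card_mul_sum_mem hp) ht hmean_le

lemma StrictConcaveOn.sum_eq_card_mul_iff_of_sum_le (hf : StrictConcaveOn ℝ s f)
    (hmono : StrictMonoOn f s) (hp : ∀ i, p i ∈ s) (ht : t ∈ s) (hsum : ∑ i, p i ≤ n * t) :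
    ∑ i, f (p i) = n * f t ↔ ∀ i, p i = t := by
  refine ⟨fun heq => ?_, fun h => by simp [h, card_univ]⟩
  have hmean := hf.1.inv_card_mul_sum_mem hp
  have hmean_le : n⁻¹ * ∑ i, p i ≤ t := by rwa [inv_mul_le_iff₀ (by positivity)]
  have hjensen := hf.concaveOn.sum_le_card_mul_map_mean hp
  have hmono_mean := hmono.monotoneOn hmean ht hmean_le
  have hf_mean : f (n⁻¹ * ∑ i, p i) = f t := by
    refine le_antisymm hmono_mean (le_of_mul_le_mul_left ?_ (by positivity : (0 : ℝ) < n))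
    linarith
  have hmean_eq : n⁻¹ * ∑ i, p i = t := hmono.injOn hmean ht hf_mean
  rw [← hmean_eq]
  exact (hf.sum_eq_card_mul_map_mean_iff hp).1 (by rw [heq, hmean_eq])

theorem sum_div_add_le_and_eq_iff {c : ℝ} (hc : 0 < c) {a : ι → ℝ} (ha : ∀ i, 0 ≤ a i)
    (hsum : ∑ i, a i ≤ 1) :
    ∑ i, a i / (c + a i) ≤ n / (n * c + 1) ∧
      (∑ i, a i / (c + a i) = n / (n * c + 1) ↔ ∀ i, a i = 1 / n) := by
  have hn : (0 : ℝ) < n := by exact_mod_cast Fintype.card_pos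
  have hp : ∀ i, a i ∈ Set.Ioi (-c) := fun i => by
    simp only [Set.mem_Ioi]; linarith [ha i]
  have ht : 1 / n ∈ Set.Ioi (-c) := by
    simp only [Set.mem_Ioi]; linarith [one_div_pos.2 hn]
  have hsum' : ∑ i, a i ≤ n * (1 / n) := by rwa [mul_one_div_cancel hn.ne']
  have hvalue : n * (1 / n / (c + 1 / n)) = n / (n * c + 1) := by field_simp
  rw [← hvalue]
  exact ⟨(strictConcaveOn_div_add hc).concaveOn.sum_le_card_mul_of_sum_le
      (strictMonoOn_div_add hc).monotoneOn hp ht hsum',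
    (strictConcaveOn_div_add hc).sum_eq_card_mul_iff_of_sum_le (strictMonoOn_div_add hc) hp ht
      hsum'⟩

end UniformJensen

theorem sum_sum_le_sum_of_pairwise_disjoint {ι α β : Type*} [Fintype ι] [Fintype α]
    [AddCommMonoid β] [PartialOrder β] [IsOrderedAddMonoid β] {M : ι → Finset α}
    (hM : Pairwise (Disjoint on M)) {v : α → β} (hv : ∀ j, 0 ≤ v j) :
    ∑ i, ∑ j ∈ M i, v j ≤ ∑ j, v j := by
  classical
  rw [← sum_biUnion fun i _ i' _ h => hM h]
  exact sum_le_sum_of_subset_of_nonneg (subset_univ _) fun j _ _ => hv j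

/-- In the 3-partition reduction: supplier values `v j > 0` sum to `1`, suppliers have
    zero outside options, customers have outside option `v₀ > 0`, and the menus
    `M i` are pairwise disjoint.  With `α i = ∑_{j ∈ M i} v j`, the expected number of
    matches equals `∑ i, α i/(v₀ + α i)`, which is at most `m/(m·v₀+1)`, with equality
    iff `α i = 1/m` for all `i` (balanced menus). -/
theorem disjoint_menus_balanced (N m : ℕ) (hm : 1 ≤ m)
    (v : Fin N → ℝ) (hv : ∀ j, 0 < v j) (hsum : ∑ j, v j = 1)
    (v0 : ℝ) (hv0 : 0 < v0)
    (M : Fin m → Finset (Fin N))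
    (hdisj : ∀ i i', i ≠ i' → Disjoint (M i) (M i')) :
    (∑ i, (∑ j ∈ M i, v j) / (v0 + ∑ j ∈ M i, v j)) ≤ (m : ℝ) / (m * v0 + 1) ∧
      ((∑ i, (∑ j ∈ M i, v j) / (v0 + ∑ j ∈ M i, v j)) = (m : ℝ) / (m * v0 + 1) ↔
        ∀ i, (∑ j ∈ M i, v j) = 1 / m) := by
  have : Nonempty (Fin m) := ⟨⟨0, hm⟩⟩
  have hmass : ∑ i, ∑ j ∈ M i, v j ≤ 1 :=
    hsum ▸ sum_sum_le_sum_of_pairwise_disjoint (fun i i' => hdisj i i') fun j => (hv j).le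
  simpa only [Fintype.card_fin] using
    sum_div_add_le_and_eq_iff hv0 (fun i => sum_nonneg fun j _ => (hv j).le) hmass
end
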